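/- arXiv:1505.03654 — 3 statements merged into one kernel-verified Lean document; each statement's English description precedes it below -/
import Mathlib

section
/- Let m ≥ 1, let f ∈ L¹(ℝ^m, ℂ), let ψ : ℝ → ℂ be (essentially) bounded and measurable, and let T ∈ L¹(ℝ^m × ℝ, ℂ). Then the function (x,a,b) ↦ f(x) · conj(ψ(⟨a,x⟩ − b) · T(a,b)) is integrable on ℝ^m × (ℝ^m × ℝ), and the duality identity ∫_{ℝ^m × ℝ} (∫_{ℝ^m} f(x) · conj(ψ(⟨a,x⟩ − b)) dx) · conj(T(a,b)) da db = ∫_{ℝ^m} f(x) · conj(∫_{ℝ^m × ℝ} T(a,b) · ψ(⟨a,x⟩ − b) da db) dx holds; that is, ⟨R_ψf, T⟩ = ⟨f, R†_ψT⟩, so the dual ridgelet transform is the dual operator of the ridgelet transform. -/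
/-!
The map `(x, a, b) ↦ ⟪a, x⟫ - b` pulls null sets back to null sets (for fixed `x, a` it is a
reflected translation in `b`), so `ψ(⟪a, x⟫ - b)` stays essentially bounded, by `C` say, on the
product space. The integrand is then dominated by `C ‖f x‖ ‖T (a, b)‖`, which is integrable, and
the duality `⟨R_ψ f, T⟩ = ⟨f, R†_ψ T⟩` is Fubini's theorem.
-/

open MeasureTheory Function
open scoped RealInnerProductSpace ComplexConjugate

theorem MeasureTheory.MemLp.comp_quasiMeasurePreserving_top {α β E : Type*}
    [MeasurableSpace α] [MeasurableSpace β] [NormedAddCommGroup E]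
    {μ : Measure α} {ν : Measure β} {g : β → E} {φ : α → β}
    (hg : MemLp g ⊤ ν) (hφ : Measure.QuasiMeasurePreserving φ μ ν) : MemLp (g ∘ φ) ⊤ μ :=
  memLp_top_of_bound (hg.1.comp_quasiMeasurePreserving hφ) _
    (hφ.ae (ae_le_lpNorm_exponent_top hg))

theorem quasiMeasurePreserving_sub_snd {Z G : Type*} [MeasurableSpace Z] [MeasurableSpace G]
    [AddGroup G] [MeasurableAdd₂ G] [MeasurableNeg G] (ρ : Measure Z) (η : Measure G)
    [SFinite η] [η.IsNegInvariant] [η.IsAddLeftInvariant] {h : Z → G} (hh : Measurable h) :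
    Measure.QuasiMeasurePreserving (fun p : Z × G => h p.1 - p.2) (ρ.prod η) η := by
  have hmeas : Measurable (fun p : Z × G => h p.1 - p.2) :=
    (hh.comp measurable_fst).sub measurable_snd
  refine ⟨hmeas, Measure.AbsolutelyContinuous.mk fun s hs hs0 => ?_⟩
  rw [Measure.map_apply hmeas hs, Measure.measure_prod_null (hmeas hs)]
  filter_upwards with z
  exact ((Measure.measurePreserving_sub_left η (h z)).measure_preimage
    hs.nullMeasurableSet).trans hs0

theorem quasiMeasurePreserving_inner_sub {E : Type*} [NormedAddCommGroup E] [InnerProductSpace ℝ E]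
    [MeasurableSpace E] [BorelSpace E] [SecondCountableTopology E]
    (μ ν : Measure E) [SFinite ν] :
    Measure.QuasiMeasurePreserving (fun q : E × (E × ℝ) => ⟪q.2.1, q.1⟫ - q.2.2)
      (μ.prod (ν.prod volume)) volume :=
  (quasiMeasurePreserving_sub_snd (μ.prod ν) volume
    (h := fun p : E × E => ⟪p.2, p.1⟫) (measurable_snd.inner measurable_fst)).comp
    (measurePreserving_prodAssoc μ ν volume).symm.quasiMeasurePreserving

section Duality

variable {X Y : Type*} [MeasurableSpace X] [MeasurableSpace Y] {μ : Measure X} {ν : Measure Y}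
  {f : X → ℂ} {T : Y → ℂ} {K : X → Y → ℂ}

theorem integrable_mul_conj_mul_of_memLp_top (hf : Integrable f μ) (hT : Integrable T ν)
    (hK : MemLp (uncurry K) ⊤ (μ.prod ν)) :
    Integrable (fun q : X × Y => f q.1 * conj (K q.1 q.2 * T q.2)) (μ.prod ν) := by
  have hdom : Integrable (fun q : X × Y => lpNorm (uncurry K) ⊤ (μ.prod ν) * (‖f q.1‖ * ‖T q.2‖))
      (μ.prod ν) :=
    (hf.norm.mul_prod hT.norm).const_mul _
  refine hdom.mono' (hf.1.comp_fst.mul (hK.1.mul hT.1.comp_snd).star) ?_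
  filter_upwards [ae_le_lpNorm_exponent_top hK] with q hq
  calc ‖f q.1 * conj (K q.1 q.2 * T q.2)‖ = ‖K q.1 q.2‖ * (‖f q.1‖ * ‖T q.2‖) := by
        rw [norm_mul, RCLike.norm_conj, norm_mul]; ring
    _ ≤ _ := by gcongr; exact hq

theorem integral_integral_mul_conj_eq_integral_mul_conj_integral [SFinite μ] [SFinite ν]
    (h : Integrable (fun q : X × Y => f q.1 * conj (K q.1 q.2 * T q.2)) (μ.prod ν)) :
    ∫ y, (∫ x, f x * conj (K x y) ∂μ) * conj (T y) ∂ν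
      = ∫ x, f x * conj (∫ y, T y * K x y ∂ν) ∂μ :=
  calc ∫ y, (∫ x, f x * conj (K x y) ∂μ) * conj (T y) ∂ν
      = ∫ y, ∫ x, f x * conj (K x y * T y) ∂μ ∂ν := by
        simp_rw [← integral_mul_const, map_mul, mul_assoc]
    _ = ∫ x, ∫ y, f x * conj (K x y * T y) ∂ν ∂μ := (integral_integral_swap h).symm
    _ = ∫ x, f x * conj (∫ y, T y * K x y ∂ν) ∂μ := by
        simp_rw [← integral_conj, ← integral_const_mul, mul_comm (T _)]

end Duality

theorem stmt2_general (m : ℕ)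
    (f : EuclideanSpace ℝ (Fin m) → ℂ) (hf : Integrable f)
    (ψ : ℝ → ℂ) (hψbdd : MemLp ψ ⊤ volume)
    (T : EuclideanSpace ℝ (Fin m) × ℝ → ℂ) (hT : Integrable T) :
    Integrable (fun q : EuclideanSpace ℝ (Fin m) × (EuclideanSpace ℝ (Fin m) × ℝ) =>
      f q.1 * (starRingEnd ℂ) (ψ (⟪q.2.1, q.1⟫ - q.2.2) * T q.2)) ∧
    ∫ p : EuclideanSpace ℝ (Fin m) × ℝ,
        (∫ x : EuclideanSpace ℝ (Fin m), f x * (starRingEnd ℂ) (ψ (⟪p.1, x⟫ - p.2)))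
          * (starRingEnd ℂ) (T p)
      = ∫ x : EuclideanSpace ℝ (Fin m),
          f x * (starRingEnd ℂ)
            (∫ p : EuclideanSpace ℝ (Fin m) × ℝ, T p * ψ (⟪p.1, x⟫ - p.2)) := by
  have hint := integrable_mul_conj_mul_of_memLp_top (K := fun x p => ψ (⟪p.1, x⟫ - p.2)) hf hT
    (hψbdd.comp_quasiMeasurePreserving_top (quasiMeasurePreserving_inner_sub volume volume))
  exact ⟨hint, integral_integral_mul_conj_eq_integral_mul_conj_integral hint⟩

/-- For `f ∈ L¹(ℝ^m)`, `ψ` essentially bounded measurable, and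
`T ∈ L¹(ℝ^m × ℝ)`, the function `(x,(a,b)) ↦ f(x)·conj(ψ(⟨a,x⟩−b)·T(a,b))` is integrable
on the product, and the duality identity `⟨R_ψ f, T⟩ = ⟨f, R†_ψ T⟩` holds. -/
theorem stmt2 (m : ℕ) (hm : 1 ≤ m)
    (f : EuclideanSpace ℝ (Fin m) → ℂ) (hf : Integrable f)
    (ψ : ℝ → ℂ) (hψmeas : AEStronglyMeasurable ψ volume) (hψbdd : MemLp ψ ⊤ volume)
    (T : EuclideanSpace ℝ (Fin m) × ℝ → ℂ) (hT : Integrable T) :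
    Integrable (fun q : EuclideanSpace ℝ (Fin m) × (EuclideanSpace ℝ (Fin m) × ℝ) =>
      f q.1 * (starRingEnd ℂ) (ψ (⟪q.2.1, q.1⟫ - q.2.2) * T q.2)) ∧
    ∫ p : EuclideanSpace ℝ (Fin m) × ℝ,
        (∫ x : EuclideanSpace ℝ (Fin m), f x * (starRingEnd ℂ) (ψ (⟪p.1, x⟫ - p.2)))
          * (starRingEnd ℂ) (T p)
      = ∫ x : EuclideanSpace ℝ (Fin m),
          f x * (starRingEnd ℂ)
            (∫ p : EuclideanSpace ℝ (Fin m) × ℝ, T p * ψ (⟪p.1, x⟫ - p.2)) :=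
  stmt2_general m f hf ψ hψbdd T hT
end

section
/- Let m ≥ 1, let f ∈ L¹(ℝ^m, ℂ), and let ψ : ℝ → ℂ be a Schwartz function. Then for every unit vector u ∈ ℝ^m, every α > 0 and every β ∈ ℝ, the ridgelet transform has the Fourier representation ∫_{ℝ^m} f(x) · conj(ψ((⟨u,x⟩ − β)/α)) · α^{−1} dx = (2π)^{−1} ∫_ℝ 𝓕f(ω·u) · conj(𝓕ψ(α·ω)) · e^{iωβ} dω, where the right-hand integrand is integrable in ω. -/
open MeasureTheory
open scoped RealInnerProductSpace SchwartzMap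

/-- The one-dimensional Fourier transform `𝓕ψ(ω) = ∫ ψ(t) e^{−iωt} dt`. -/
noncomputable def fourierLine (ψ : ℝ → ℂ) (ω : ℝ) : ℂ :=
  ∫ t : ℝ, ψ t * Complex.exp (-(Complex.I * ω * t))

/-- The `m`-dimensional Fourier transform `𝓕f(ξ) = ∫ f(x) e^{−i⟨ξ,x⟩} dx`. -/
noncomputable def fourierEuc {m : ℕ} (f : EuclideanSpace ℝ (Fin m) → ℂ)
    (ξ : EuclideanSpace ℝ (Fin m)) : ℂ :=
  ∫ x : EuclideanSpace ℝ (Fin m), f x * Complex.exp (-(Complex.I * (⟪ξ, x⟫ : ℝ)))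

/-! Insert Fourier inversion for `ψ`: the kernel `α⁻¹ conj ψ((⟪u, x⟫ - β) / α)` is
`(2π)⁻¹ ∫ conj 𝓕ψ(αω) e^{-iω(⟪u, x⟫ - β)} dω`. The resulting double integral of
`f x · conj 𝓕ψ(αω) · e^{iω(β - ⟪u, x⟫)}` converges absolutely because `f` and `𝓕ψ` are
integrable, so by Fubini we may integrate over `x` first, which produces `𝓕f(ωu)`. -/

open Real Complex
open scoped FourierTransform ComplexConjugate

lemma fourierLine_eq_fourier (ψ : ℝ → ℂ) (ω : ℝ) : fourierLine ψ ω = 𝓕 ψ (ω / (2 * π)) := by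
  rw [Real.fourier_real_eq_integral_exp_smul, fourierLine]
  congr 1 with t
  rw [smul_eq_mul, mul_comm]
  congr 2
  push_cast
  field_simp

lemma integrable_fourierLine_comp_mul {ψ : ℝ → ℂ} (hψ : Integrable (𝓕 ψ)) {α : ℝ} (hα : α ≠ 0) :
    Integrable fun ω : ℝ => fourierLine ψ (α * ω) := by
  refine (hψ.comp_mul_left' (div_ne_zero hα (by positivity) : α / (2 * π) ≠ 0)).congr
    (.of_forall fun ω => ?_)
  simp only [fourierLine_eq_fourier, mul_div_right_comm]

lemma integral_fourierLine_mul_exp {ψ : ℝ → ℂ} (hc : Continuous ψ) (hi : Integrable ψ)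
    (hF : Integrable (𝓕 ψ)) (s : ℝ) :
    ∫ ω : ℝ, fourierLine ψ ω * exp (I * ω * s) = (2 * π : ℝ) * ψ s := by
  set h : ℝ → ℂ := fun ξ => exp (↑(2 * π * (ξ * s)) * I) * 𝓕 ψ ξ
  have hω (ω : ℝ) : fourierLine ψ ω * exp (I * ω * s) = h ((2 * π)⁻¹ * ω) := by
    rw [fourierLine_eq_fourier, mul_comm, inv_mul_eq_div]
    congr 2
    push_cast
    field_simp
  calc ∫ ω : ℝ, fourierLine ψ ω * exp (I * ω * s)
      = ∫ ω : ℝ, h ((2 * π)⁻¹ * ω) := by simp_rw [hω]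
    _ = (2 * π : ℝ) * 𝓕⁻ (𝓕 ψ) s := by
        rw [Measure.integral_comp_inv_mul_left, abs_of_pos (by positivity), real_smul,
          Real.fourierInv_eq']
        simp only [h, RCLike.inner_apply, conj_trivial, mul_comm s, smul_eq_mul]
    _ = (2 * π : ℝ) * ψ s := by rw [hc.fourierInv_fourier_eq hi hF]

lemma integral_conj_fourierLine_comp_mul_mul_exp {ψ : ℝ → ℂ} (hc : Continuous ψ)
    (hi : Integrable ψ) (hF : Integrable (𝓕 ψ)) {α : ℝ} (hα : 0 < α) (r : ℝ) :
    ∫ ω : ℝ, conj (fourierLine ψ (α * ω)) * exp (-(I * ω * r))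
      = (2 * π : ℝ) * (α⁻¹ : ℝ) * conj (ψ (r / α)) := by
  set g : ℝ → ℂ := fun ω => conj (fourierLine ψ ω) * exp (-(I * ω * (r / α : ℝ)))
  have hg : ∫ ω, g ω = (2 * π : ℝ) * conj (ψ (r / α)) := by
    rw [← conj_ofReal, ← map_mul, ← integral_fourierLine_mul_exp hc hi hF, ← integral_conj]
    simp only [g, map_mul, ← exp_conj, conj_I, conj_ofReal, neg_mul]
  calc ∫ ω : ℝ, conj (fourierLine ψ (α * ω)) * exp (-(I * ω * r))
      = ∫ ω : ℝ, g (α * ω) := by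
        congr 1 with ω
        have hα' : (α : ℂ) ≠ 0 := by exact_mod_cast hα.ne'
        simp only [g]
        congr 3
        push_cast
        field_simp
    _ = (2 * π : ℝ) * (α⁻¹ : ℝ) * conj (ψ (r / α)) := by
        rw [Measure.integral_comp_mul_left, hg, abs_of_pos (inv_pos.mpr hα), real_smul]
        ring

lemma integrable_prod_mul_mul_exp_ofReal_mul_I {X Y : Type*} [MeasurableSpace X]
    [MeasurableSpace Y] {μ : Measure X} {ν : Measure Y} [SFinite ν] {f : X → ℂ} {g : Y → ℂ}
    (hf : Integrable f μ) (hg : Integrable g ν) {φ : X × Y → ℝ} (hφ : Measurable φ) :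
    Integrable (fun p => f p.1 * g p.2 * exp (φ p * I)) (μ.prod ν) :=
  (hf.mul_prod hg).mono
    ((hf.mul_prod hg).aestronglyMeasurable.mul (by fun_prop))
    (.of_forall fun p => by rw [norm_mul, norm_exp_ofReal_mul_I, mul_one])

theorem stmt4_general (m : ℕ)
    (f : EuclideanSpace ℝ (Fin m) → ℂ) (hf : Integrable f)
    (ψ : 𝓢(ℝ, ℂ))
    (u : EuclideanSpace ℝ (Fin m)) (α : ℝ) (hα : 0 < α) (β : ℝ) :
    Integrable (fun ω : ℝ =>
      fourierEuc f (ω • u) * (starRingEnd ℂ) (fourierLine ψ (α * ω))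
        * Complex.exp (Complex.I * ω * β)) ∧
    ∫ x : EuclideanSpace ℝ (Fin m),
        f x * (starRingEnd ℂ) (ψ ((⟪u, x⟫ - β) / α)) * ((α⁻¹ : ℝ) : ℂ)
      = ((2 * Real.pi : ℝ) : ℂ)⁻¹
          * ∫ ω : ℝ, fourierEuc f (ω • u) * (starRingEnd ℂ) (fourierLine ψ (α * ω))
              * Complex.exp (Complex.I * ω * β) := by
  have hFψ : Integrable (𝓕 ⇑ψ) := (𝓕 ψ).integrable
  set G : EuclideanSpace ℝ (Fin m) × ℝ → ℂ := fun p =>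
    f p.1 * conj (fourierLine ψ (α * p.2)) * exp (↑(p.2 * (β - ⟪u, p.1⟫)) * I)
  have hG : Integrable G (volume.prod volume) :=
    integrable_prod_mul_mul_exp_ofReal_mul_I hf
      (conjLIE.integrable_comp_iff.2 (integrable_fourierLine_comp_mul hFψ hα.ne')) (by fun_prop)
  have hG_freq (x) : ∫ ω, G (x, ω)
      = (2 * π : ℝ) * (f x * conj (ψ ((⟪u, x⟫ - β) / α)) * (α⁻¹ : ℝ)) := by
    have hphase (ω : ℝ) : exp (↑(ω * (β - ⟪u, x⟫)) * I) = exp (-(I * ω * ↑(⟪u, x⟫ - β))) := by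
      push_cast; ring_nf
    simp_rw [G, hphase, mul_assoc (f x), integral_const_mul,
      integral_conj_fourierLine_comp_mul_mul_exp ψ.continuous ψ.integrable hFψ hα]
    ring
  have hG_space (ω : ℝ) : ∫ x, G (x, ω)
      = fourierEuc f (ω • u) * conj (fourierLine ψ (α * ω)) * exp (I * ω * β) := by
    have hphase (x) : exp (↑(ω * (β - ⟪u, x⟫)) * I)
        = exp (-(I * ↑⟪ω • u, x⟫)) * exp (I * ω * β) := by
      rw [← Complex.exp_add, real_inner_smul_left]; push_cast; ring_nf
    simp_rw [G, hphase, fourierEuc, ← integral_mul_const]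
    congr 1 with x
    ring
  refine ⟨hG.integral_prod_right.congr (.of_forall hG_space), ?_⟩
  rw [← integral_congr_ae (.of_forall hG_space), ← integral_integral_swap hG]
  simp_rw [hG_freq, integral_const_mul]
  rw [← mul_assoc, inv_mul_cancel₀ (by exact_mod_cast Real.two_pi_pos.ne'), one_mul]

/-- For `f ∈ L¹(ℝ^m)` and Schwartz `ψ`, the ridgelet transform in
polar coordinates has the Fourier representation
`R_ψf(u,α,β) = (2π)⁻¹ ∫ 𝓕f(ωu) conj(𝓕ψ(αω)) e^{iωβ} dω`, the integrand being
integrable in `ω`. -/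
theorem stmt4 (m : ℕ) (hm : 1 ≤ m)
    (f : EuclideanSpace ℝ (Fin m) → ℂ) (hf : Integrable f)
    (ψ : 𝓢(ℝ, ℂ))
    (u : EuclideanSpace ℝ (Fin m)) (hu : ‖u‖ = 1) (α : ℝ) (hα : 0 < α) (β : ℝ) :
    Integrable (fun ω : ℝ =>
      fourierEuc f (ω • u) * (starRingEnd ℂ) (fourierLine ψ (α * ω))
        * Complex.exp (Complex.I * ω * β)) ∧
    ∫ x : EuclideanSpace ℝ (Fin m),
        f x * (starRingEnd ℂ) (ψ ((⟪u, x⟫ - β) / α)) * ((α⁻¹ : ℝ) : ℂ)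
      = ((2 * Real.pi : ℝ) : ℂ)⁻¹
          * ∫ ω : ℝ, fourierEuc f (ω • u) * (starRingEnd ℂ) (fourierLine ψ (α * ω))
              * Complex.exp (Complex.I * ω * β) :=
  stmt4_general m f hf ψ u α hα β
end

section
/- Let g : ℝ → ℂ be a Schwartz function and let T be a tempered distribution on ℝ (a continuous linear functional on the complex Schwartz space). Define W(α,β) = T(z ↦ g(αz + β)) for α > 0, β ∈ ℝ. Then W has slow growth on the half-plane: there exist N ∈ ℕ and a constant C > 0 such that |W(α,β)| ≤ C · (α + 1/α)^N · (1 + β²)^{N/2} for all α > 0 and β ∈ ℝ. -/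
/-!
Since `f ↦ ‖T f‖` is a continuous seminorm on `𝓢(ℝ, ℂ)`, it is dominated by the finitely many
Schwartz seminorms of orders `(k, n) ≤ (m, m)`. For `h z = g (α z + β)` the chain rule gives
`h⁽ⁿ⁾ x = αⁿ g⁽ⁿ⁾ (α x + β)`, and `|x| ≤ α⁻¹ (1 + |β|) (1 + |α x + β|)`, so the `(k, n)` seminorm
of `h` is at most `αⁿ α⁻ᵏ (1 + |β|)ᵏ` times a seminorm of `g`; here `αⁿ α⁻ᵏ ≤ (α + α⁻¹)²ᵐ` and
`(1 + |β|)ᵏ ≤ 2ᵐ (1 + β²)ᵐ`.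
-/

open scoped SchwartzMap

theorem iteratedDeriv_comp_mul_add {𝕜 F : Type*} [NontriviallyNormedField 𝕜]
    [NormedAddCommGroup F] [NormedSpace 𝕜 F] {n : ℕ} {f : 𝕜 → F} (hf : ContDiff 𝕜 n f)
    (c b x : 𝕜) :
    iteratedDeriv n (fun z => f (c * z + b)) x = c ^ n • iteratedDeriv n f (c * x + b) := by
  have hfb : ContDiff 𝕜 n (fun w => f (w + b)) := hf.comp (contDiff_id.add contDiff_const)
  rw [iteratedDeriv_comp_const_smul hfb, iteratedDeriv_comp_add_const]

theorem pow_mul_inv_pow_le_add_inv_pow {α : ℝ} (hα : 0 < α) {n k N : ℕ} (h : n + k ≤ N) :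
    α ^ n * α⁻¹ ^ k ≤ (α + α⁻¹) ^ N := by
  have h2 : 2 ≤ α + α⁻¹ := by
    rw [← sub_nonneg, show α + α⁻¹ - 2 = (α - 1) ^ 2 / α by field_simp; ring]
    positivity
  calc α ^ n * α⁻¹ ^ k ≤ (α + α⁻¹) ^ n * (α + α⁻¹) ^ k := by
        gcongr <;> linarith [inv_pos.2 hα]
    _ = (α + α⁻¹) ^ (n + k) := (pow_add _ _ _).symm
    _ ≤ (α + α⁻¹) ^ N := pow_le_pow_right₀ (by linarith) h

theorem one_add_abs_pow_le {k m : ℕ} (h : k ≤ m) (β : ℝ) :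
    (1 + |β|) ^ k ≤ 2 ^ m * (1 + β ^ 2) ^ m := by
  have hβ : 1 + |β| ≤ 2 * (1 + β ^ 2) := by nlinarith [abs_nonneg β, sq_abs β]
  calc (1 + |β|) ^ k ≤ (2 * (1 + β ^ 2)) ^ k := by gcongr
    _ ≤ (2 * (1 + β ^ 2)) ^ m := pow_le_pow_right₀ (by nlinarith [sq_nonneg β]) h
    _ = 2 ^ m * (1 + β ^ 2) ^ m := mul_pow _ _ _

theorem abs_le_inv_mul_one_add_abs_mul {α : ℝ} (hα : 0 < α) (x β : ℝ) :
    |x| ≤ α⁻¹ * ((1 + |β|) * (1 + |α * x + β|)) := by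
  rw [le_inv_mul_iff₀ hα]
  calc α * |x| = |(α * x + β) - β| := by rw [add_sub_cancel_right, abs_mul, abs_of_pos hα]
    _ ≤ |α * x + β| + |β| := abs_sub _ _
    _ ≤ (1 + |β|) * (1 + |α * x + β|) := by nlinarith [abs_nonneg β, abs_nonneg (α * x + β)]

namespace SchwartzMap

variable {𝕜 E F V : Type*} [NormedAddCommGroup E] [NormedSpace ℝ E]
  [NormedAddCommGroup F] [NormedSpace ℝ F] [NontriviallyNormedField 𝕜] [NormedSpace 𝕜 F]
  [SMulCommClass ℝ 𝕜 F]

theorem exists_norm_le_sup_seminorm [NormedAddCommGroup V] [NormedSpace 𝕜 V]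
    (T : 𝓢(E, F) →L[𝕜] V) :
    ∃ (m : ℕ) (C : ℝ), 0 < C ∧
      ∀ f, ‖T f‖ ≤ C * (Finset.Iic (m, m)).sup (schwartzSeminormFamily 𝕜 E F) f := by
  obtain ⟨s, C, -, hC⟩ := Seminorm.bound_of_continuous (schwartz_withSeminorms 𝕜 E F)
    ((normSeminorm 𝕜 V).comp T.toLinearMap) (by exact T.continuous.norm)
  set m := s.sup fun kn => max kn.1 kn.2
  have hs : s ⊆ Finset.Iic (m, m) := fun kn hkn => by
    have hkn := Finset.le_sup (f := fun kn : ℕ × ℕ => max kn.1 kn.2) hkn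
    exact Finset.mem_Iic.2
      (Prod.le_def.2 ⟨(le_max_left _ _).trans hkn, (le_max_right _ _).trans hkn⟩)
  refine ⟨m, C + 1, by positivity, fun f => ?_⟩
  calc ‖T f‖ ≤ C * s.sup (schwartzSeminormFamily 𝕜 E F) f := hC f
    _ ≤ (C + 1) * (Finset.Iic (m, m)).sup (schwartzSeminormFamily 𝕜 E F) f := by
      gcongr
      · linarith
      · exact Seminorm.le_def.1 (Finset.sup_mono (f := schwartzSeminormFamily 𝕜 E F) hs) f

theorem sup_seminorm_le_of_eq_comp_mul_add {f h : 𝓢(ℝ, F)} {α : ℝ} (hα : 0 < α) (β : ℝ)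
    (hh : ⇑h = fun z => f (α * z + β)) (m : ℕ) :
    (Finset.Iic (m, m)).sup (schwartzSeminormFamily 𝕜 ℝ F) h ≤
      (α + α⁻¹) ^ (2 * m) * (1 + β ^ 2) ^ m *
        (4 ^ m * (Finset.Iic (m, m)).sup (schwartzSeminormFamily 𝕜 ℝ F) f) := by
  refine Seminorm.finset_sup_apply_le (by positivity) fun ⟨k, n⟩ hkn => ?_
  obtain ⟨hk, hn⟩ := Finset.mem_Iic.1 hkn
  refine seminorm_le_bound' 𝕜 k n h (by positivity) fun x => ?_
  rw [hh, iteratedDeriv_comp_mul_add (f.smooth n) α β x, norm_smul, Real.norm_eq_abs, abs_pow,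
    abs_of_pos hα]
  set y := α * x + β
  have hf : (1 + |y|) ^ k * ‖iteratedDeriv n f y‖ ≤
      2 ^ m * (Finset.Iic (m, m)).sup (schwartzSeminormFamily 𝕜 ℝ F) f := by
    have := one_add_le_sup_seminorm_apply (𝕜 := 𝕜) (m := (m, m)) hk hn f y
    rwa [norm_iteratedFDeriv_eq_norm_iteratedDeriv, Real.norm_eq_abs] at this
  calc |x| ^ k * (α ^ n * ‖iteratedDeriv n f y‖)
      ≤ (α⁻¹ * ((1 + |β|) * (1 + |y|))) ^ k * (α ^ n * ‖iteratedDeriv n f y‖) := by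
        gcongr; exact abs_le_inv_mul_one_add_abs_mul hα x β
    _ = (α ^ n * α⁻¹ ^ k) * (1 + |β|) ^ k * ((1 + |y|) ^ k * ‖iteratedDeriv n f y‖) := by
        rw [mul_pow, mul_pow]; ring
    _ ≤ (α + α⁻¹) ^ (2 * m) * (2 ^ m * (1 + β ^ 2) ^ m) *
          (2 ^ m * (Finset.Iic (m, m)).sup (schwartzSeminormFamily 𝕜 ℝ F) f) := by
        gcongr
        · exact pow_mul_inv_pow_le_add_inv_pow hα (by omega)
        · exact one_add_abs_pow_le hk β
    _ = _ := by rw [show (4 : ℝ) ^ m = 2 ^ m * 2 ^ m by rw [← mul_pow]; norm_num]; ring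

end SchwartzMap

/-- Let `g` be a Schwartz function and `T` a tempered distribution
on `ℝ`, and let `W(α,β) = T(z ↦ g(αz + β))` for `α > 0`. Then `W` has slow growth on
the half-plane: `|W(α,β)| ≤ C (α + 1/α)^N (1 + β²)^{N/2}` for some `N` and `C > 0`. -/
theorem stmt12 (g : 𝓢(ℝ, ℂ)) (T : 𝓢(ℝ, ℂ) →L[ℂ] ℂ)
    (G : ℝ → ℝ → 𝓢(ℝ, ℂ))
    (hG : ∀ α : ℝ, 0 < α → ∀ β : ℝ, ⇑(G α β) = fun z : ℝ => g (α * z + β)) :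
    ∃ (N : ℕ) (C : ℝ), 0 < C ∧ ∀ (α β : ℝ), 0 < α →
      ‖T (G α β)‖ ≤ C * (α + 1 / α) ^ N * (1 + β ^ 2) ^ ((N : ℝ) / 2) := by
  obtain ⟨m, C, hC, hT⟩ := SchwartzMap.exists_norm_le_sup_seminorm T
  set S := (Finset.Iic (m, m)).sup (schwartzSeminormFamily ℂ ℝ ℂ) g
  refine ⟨2 * m, C * 4 ^ m * (S + 1), by positivity, fun α β hα => ?_⟩
  have hexp : ((2 * m : ℕ) : ℝ) / 2 = m := by push_cast; ring
  rw [hexp, Real.rpow_natCast, one_div]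
  calc ‖T (G α β)‖
      ≤ C * ((α + α⁻¹) ^ (2 * m) * (1 + β ^ 2) ^ m * (4 ^ m * S)) :=
        (hT _).trans <| by
          gcongr; exact SchwartzMap.sup_seminorm_le_of_eq_comp_mul_add hα β (hG α hα β) m
    _ = C * 4 ^ m * S * (α + α⁻¹) ^ (2 * m) * (1 + β ^ 2) ^ m := by ring
    _ ≤ C * 4 ^ m * (S + 1) * (α + α⁻¹) ^ (2 * m) * (1 + β ^ 2) ^ m := by
        gcongr; linarith
end
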